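/- arXiv:1807.10369 — 3 statements merged into one kernel-verified Lean document; each statement's English description precedes it below -/
import Mathlib

section
/- Let N̂ be a homogeneous norm on the n-th Heisenberg group ℍⁿ, let d = d_N̂ be the induced left-invariant homogeneous distance, and let N(z) = N̂(z,0) be the associated norm on ℝ^{2n}. Then the metric space (ℍⁿ, d) has the geodesic linearity property (every infinite geodesic is a line) if and only if N is a strictly convex norm on ℝ^{2n}. -/
open MeasureTheory Set

noncomputable section

/-- `ℝ^{2n}`, with the Euclidean norm. -/
abbrev V (n : ℕ) := EuclideanSpace ℝ (Fin (2 * n))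

/-- The `n`-th Heisenberg group as a set: `ℝ^{2n} × ℝ`. -/
abbrev Heis (n : ℕ) := V n × ℝ

/-- Euclidean dot product on `ℝ^{2n}`. -/
def dot {n : ℕ} (p z : V n) : ℝ := ∑ i, p i * z i

/-- Index `i` as an element of the first half of `Fin (2n)`. -/
def fstIdx {n : ℕ} (i : Fin n) : Fin (2 * n) := ⟨i.1, by have := i.isLt; omega⟩

/-- Index `n + i` as an element of the second half of `Fin (2n)`. -/
def sndIdx {n : ℕ} (i : Fin n) : Fin (2 * n) := ⟨n + i.1, by have := i.isLt; omega⟩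

/-- The symplectic form `⟨z, J_n z'⟩ = ∑ (y_i x'_i - x_i y'_i)` on `ℝ^{2n}`. -/
def symp {n : ℕ} (z z' : V n) : ℝ :=
  ∑ i : Fin n, (z (sndIdx i) * z' (fstIdx i) - z (fstIdx i) * z' (sndIdx i))

/-- Heisenberg group multiplication. -/
def hmul {n : ℕ} (g g' : Heis n) : Heis n :=
  (g.1 + g'.1, g.2 + g'.2 + 2 * symp g.1 g'.1)

/-- Heisenberg group inverse. -/
def hinv {n : ℕ} (g : Heis n) : Heis n := (-g.1, -g.2)

/-- Heisenberg dilation `δ_λ(z,t) = (λ z, λ² t)`. -/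
def dil {n : ℕ} (l : ℝ) (g : Heis n) : Heis n := (l • g.1, l ^ 2 * g.2)

/-- `N : ℝ^{2n} → ℝ` is a norm. -/
structure IsNorm {n : ℕ} (N : V n → ℝ) : Prop where
  nonneg : ∀ z, 0 ≤ N z
  eq_zero_iff : ∀ z, N z = 0 ↔ z = 0
  smul : ∀ (a : ℝ) (z : V n), N (a • z) = |a| * N z
  triangle : ∀ z z', N (z + z') ≤ N z + N z'

/-- `N` is a strictly convex norm: additivity of the norm forces positive collinearity. -/
def StrictlyConvexNorm {n : ℕ} (N : V n → ℝ) : Prop :=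
  ∀ z z' : V n, z ≠ 0 → z' ≠ 0 → N (z + z') = N z + N z' →
    ∃ α : ℝ, 0 < α ∧ z' = α • z

/-- The subdifferential of `f : ℝ^{2n} → ℝ` at `z`. -/
def subdiff {n : ℕ} (f : V n → ℝ) (z : V n) : Set (V n) :=
  {p | ∀ z', f z + dot p (z' - z) ≤ f z'}

/-- A norm is smooth if its subdifferential is a singleton away from the origin. -/
def SmoothNorm {n : ℕ} (N : V n → ℝ) : Prop :=
  ∀ z : V n, z ≠ 0 → ∃ p : V n, subdiff N z = {p}

/-- The dual norm `N_*(p) = sup { p·z : N(z) = 1 }`. -/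
def dualN {n : ℕ} (N : V n → ℝ) (p : V n) : ℝ :=
  sSup ((fun z => dot p z) '' {z | N z = 1})

/-- `F_N(z) = ½ N(z)²`. -/
def FN {n : ℕ} (N : V n → ℝ) (z : V n) : ℝ := (1 / 2) * (N z) ^ 2

/-- The Legendre transform `f*(p) = sup_z (p·z - f(z))`. -/
def legendre {n : ℕ} (f : V n → ℝ) (p : V n) : ℝ :=
  ⨆ z : V n, (dot p z - f z)

/-- A horizontal (absolutely continuous) curve on `[a,b]`, encoded via an integrable
horizontal velocity `v = γ̇_I` together with the integral form of the horizontality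
condition for the last coordinate. -/
structure HorizCurve (n : ℕ) (a b : ℝ) where
  γ : ℝ → Heis n
  v : ℝ → V n
  intg : IntegrableOn v (Icc a b)
  pos : ∀ s ∈ Icc a b, (γ s).1 = (γ a).1 + ∫ u in a..s, v u
  vert : ∀ s ∈ Icc a b, (γ s).2 = (γ a).2 + ∫ u in a..s, 2 * symp ((γ u).1) (v u)

/-- The sub-Finsler distance associated to the norm `N` on `ℍⁿ`. -/
def dSF (n : ℕ) (N : V n → ℝ) (g g' : Heis n) : ℝ :=
  sInf { L | ∃ (a b : ℝ) (c : HorizCurve n a b), a ≤ b ∧ c.γ a = g ∧ c.γ b = g' ∧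
    L = ∫ s in a..b, N (c.v s) }

/-- Horizontal projection of the trajectory of the control `v`,
solving `γ̇_I = -v`, `γ_I(0) = 0`. -/
def trajI (n : ℕ) (v : ℝ → V n) (s : ℝ) : V n := -∫ u in (0:ℝ)..s, v u

/-- The trajectory of the control `v`: solves `ẋ_i = -v_i`, `ẏ_i = -v_{n+i}`,
`ṫ = -2∑(y_i v_i - x_i v_{n+i})`, starting at the neutral element. -/
def traj (n : ℕ) (v : ℝ → V n) (s : ℝ) : Heis n :=
  (trajI n v s, -∫ u in (0:ℝ)..s, 2 * symp (trajI n v u) (v u))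

/-- `v` is an admissible control steering `e` to `g` in time `T`. -/
def Admissible (n : ℕ) (T : ℝ) (g : Heis n) (v : ℝ → V n) : Prop :=
  IntegrableOn v (Icc 0 T) ∧ traj n v T = g

/-- `v` is optimal for the energy problem (P). -/
def OptimalEnergy (n : ℕ) (N : V n → ℝ) (T : ℝ) (g : Heis n) (v : ℝ → V n) : Prop :=
  Admissible n T g v ∧ ∀ w : ℝ → V n, Admissible n T g w →
    (∫ s in (0:ℝ)..T, FN N (v s)) ≤ ∫ s in (0:ℝ)..T, FN N (w s)

/-- `v` is optimal for the length problem. -/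
def OptimalLength (n : ℕ) (N : V n → ℝ) (T : ℝ) (g : Heis n) (v : ℝ → V n) : Prop :=
  Admissible n T g v ∧ ∀ w : ℝ → V n, Admissible n T g w →
    (∫ s in (0:ℝ)..T, N (v s)) ≤ ∫ s in (0:ℝ)..T, N (w s)

/-- The standard symplectic matrix `J_n` acting on `ℝ^{2n}`:
`(J z)_i = -z_{n+i}`, `(J z)_{n+i} = z_i`. -/
def Jmat (n : ℕ) (z : V n) : V n :=
  (EuclideanSpace.equiv (Fin (2 * n)) ℝ).symm
    (fun j => if h : (j : ℕ) < n then -z ⟨n + (j : ℕ), by have := j.isLt; omega⟩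
      else z ⟨(j : ℕ) - n, by have := j.isLt; omega⟩)

/-- The function `a` associated to a multiplier `λ` (with `λ_{2n+1} ≡ k`) and a control `v`:
`a_i = λ_i + 2k y_i`, `a_{n+i} = λ_{n+i} - 2k x_i`, where `(x,y) = γ_I` is the horizontal
projection of the trajectory of `v`. -/
def afun (n : ℕ) (v : ℝ → V n) (lam : ℝ → V n) (k : ℝ) (s : ℝ) : V n :=
  lam s - (2 * k) • Jmat n (trajI n v s)

/-- A Pontryagin multiplier `(λ₀, λ)` for the control `v` on `[0,T]` for problem (P):
`λ = (λ_I, k)` with `λ_{2n+1} ≡ k` constant, `λ̇_i = -2k v_{n+i}`, `λ̇_{n+i} = 2k v_i`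
(in integrated form), nontriviality, the pointwise minimum principle, and constancy
of the minimized Hamiltonian. -/
structure PMP (n : ℕ) (N : V n → ℝ) (T : ℝ) (v : ℝ → V n) (l0 : ℝ) where
  lam : ℝ → V n
  k : ℝ
  lam_eq : ∀ s ∈ Icc (0:ℝ) T,
    lam s = lam 0 + (2 * k) • ∫ u in (0:ℝ)..s, Jmat n (v u)
  nontriv : ¬(l0 = 0 ∧ k = 0 ∧ lam 0 = 0)
  argmin : ∀ s ∈ Icc (0:ℝ) T, ∀ u : V n,
    l0 * FN N (v s) - dot (afun n v lam k s) (v s) ≤ l0 * FN N u - dot (afun n v lam k s) u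
  isConst : ∃ c : ℝ, ∀ s ∈ Icc (0:ℝ) T,
    l0 * FN N (v s) - dot (afun n v lam k s) (v s) = c

/-- A homogeneous norm on the Heisenberg group `ℍⁿ`. -/
structure IsHomNorm {n : ℕ} (Nh : Heis n → ℝ) : Prop where
  nonneg : ∀ g, 0 ≤ Nh g
  eq_zero_iff : ∀ g, Nh g = 0 ↔ g = ((0 : V n), (0 : ℝ))
  symm : ∀ g, Nh (hinv g) = Nh g
  triangle : ∀ g g', Nh (hmul g g') ≤ Nh g + Nh g'
  homog : ∀ l : ℝ, 0 < l → ∀ g, Nh (dil l g) = l * Nh g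

/-- The geodesic linearity property: every infinite geodesic of `(ℍⁿ, d)` is an affine
line in `ℝ^{2n+1}`. -/
def GLP (n : ℕ) (d : Heis n → Heis n → ℝ) : Prop :=
  ∀ γ : ℝ → Heis n, (∀ s s' : ℝ, d (γ s) (γ s') = |s - s'|) →
    ∃ p u : Heis n, ∀ s : ℝ, γ s = p + s • u

/-- An infinite multiplier for the control `v` on `[0,∞)`. -/
def IsInfMult (n : ℕ) (N : V n → ℝ) (v : ℝ → V n) (lam : ℝ → V n) (k : ℝ) : Prop :=
  ∀ T : ℝ, 0 < T → ∃ m : PMP n N T v 1, m.lam = lam ∧ m.k = k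

/-!
Along an infinite geodesic the horizontal projection travels at unit `N`-speed: if a chord `[s₀, s₁]` fell short by
`η > 0`, replacing it by its horizontal straight segment would save `η` at the price of a
vertical shift, and conjugating by a horizontal vector `e` with `ω(e, w) ≍ N(e) N(w)` undoes a
vertical shift at horizontal displacement `w` for a cost `O(1/N(w))`. Hence the horizontal
displacement from `s₀` stays bounded; but then the vertical displacement, which must grow
quadratically with arclength, is additive up to bounded errors, which is absurd. With unit
horizontal speed, strict convexity makes consecutive horizontal increments positively
proportional, so the projection is an affine line; the vertical coordinate then differs from
an affine function by increments of order `(Δs)²`, hence is affine too.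

Conversely, if `N(z + z') = N(z) + N(z')`, then `N` is additive on the cone spanned by `z`
and `z'`, and the broken line through `-z'/N(z')`, `0` and `z/N(z)` is an infinite geodesic;
the geodesic linearity property forces it to be straight, i.e. `z' ∈ ℝ_{>0} z`.
-/

lemma Seminorm.exists_le_mul_norm_euclidean {ι : Type*} [Fintype ι]
    (p : Seminorm ℝ (EuclideanSpace ℝ ι)) : ∃ C, 0 ≤ C ∧ ∀ z, p z ≤ C * ‖z‖ := by
  set b := EuclideanSpace.basisFun ι ℝ
  refine ⟨∑ i, p (b i), Finset.sum_nonneg fun i _ => apply_nonneg p _, fun z => ?_⟩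
  calc p z = p (∑ i, z i • b i) := congrArg p (b.sum_repr z).symm
    _ ≤ ∑ i, p (z i • b i) :=
        Finset.le_sum_of_subadditive p (map_zero p).le (map_add_le_add p) _ _
    _ ≤ ∑ i, ‖z‖ * p (b i) := Finset.sum_le_sum fun i _ => by
        rw [map_smul_eq_mul]
        exact mul_le_mul_of_nonneg_right (PiLp.norm_apply_le z i) (apply_nonneg p _)
    _ = (∑ i, p (b i)) * ‖z‖ := by rw [← Finset.mul_sum, mul_comm]

lemma Seminorm.map_smul_add_smul_of_map_add {E : Type*} [AddCommGroup E] [Module ℝ E]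
    (p : Seminorm ℝ E) {x y : E} (h : p (x + y) = p x + p y) {a b : ℝ} (ha : 0 ≤ a)
    (hb : 0 ≤ b) : p (a • x + b • y) = a * p x + b * p y := by
  have hsmul : ∀ {c : ℝ} (z : E), 0 ≤ c → p (c • z) = c * p z := fun z hc => by
    rw [map_smul_eq_mul, Real.norm_of_nonneg hc]
  refine le_antisymm ((map_add_le_add p _ _).trans_eq (by rw [hsmul x ha, hsmul y hb])) ?_
  rcases le_total b a with hba | hab
  · have := map_add_le_add p (a • x + b • y) ((a - b) • y)
    rw [show a • x + b • y + (a - b) • y = a • (x + y) by module, hsmul _ ha,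
      hsmul _ (sub_nonneg.mpr hba), h] at this
    linarith
  · have := map_add_le_add p (a • x + b • y) ((b - a) • x)
    rw [show a • x + b • y + (b - a) • x = b • (x + y) by module, hsmul _ hb,
      hsmul _ (sub_nonneg.mpr hab), h] at this
    linarith

lemma eq_add_smul_of_forall_lt_lt {E : Type*} [AddCommGroup E] [Module ℝ E] {f : ℝ → E}
    (hf : ∀ a b c, a < b → b < c → (c - b) • (f b - f a) = (b - a) • (f c - f b))
    (s : ℝ) :
    f s = f 0 + s • (f 1 - f 0) := by
  rcases lt_trichotomy s 0 with hs | rfl | hs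
  · linear_combination (norm := module) -hf s 0 1 hs one_pos
  · simp
  rcases lt_trichotomy s 1 with hs' | rfl | hs'
  · linear_combination (norm := module) hf 0 s 1 hs hs'
  · simp
  · linear_combination (norm := module) -hf 0 1 s one_pos hs'

lemma eq_of_abs_sub_le_mul_sq {f : ℝ → ℝ} {C : ℝ}
    (hf : ∀ x y, |f y - f x| ≤ C * (y - x) ^ 2) (x y : ℝ) : f x = f y := by
  have hderiv : ∀ x, HasDerivAt f 0 x := fun x => by
    rw [hasDerivAt_iff_isLittleO]
    simp only [smul_zero, sub_zero]
    refine (Asymptotics.IsBigO.of_bound C (.of_forall fun x' => ?_)).trans_isLittleO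
      (Asymptotics.isLittleO_pow_sub_sub x one_lt_two)
    simpa [Real.norm_eq_abs, sq_abs] using hf x x'
  exact is_const_of_deriv_eq_zero (fun x => (hderiv x).differentiableAt)
    (fun x => (hderiv x).deriv) x y

lemma StrictlyConvexNorm.smul_eq_smul {n : ℕ} {N : V n → ℝ} (hN : StrictlyConvexNorm N)
    (hsmul : ∀ (c : ℝ) z, N (c • z) = |c| * N z) {z z' : V n} (hz : z ≠ 0) (hz' : z' ≠ 0)
    (hadd : N (z + z') = N z + N z') : N z' • z = N z • z' := by
  obtain ⟨α, hα, rfl⟩ := hN z z' hz hz' hadd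
  rw [hsmul, abs_of_pos hα, smul_smul, mul_comm α]

section Symplectic

variable {n : ℕ}

lemma symp_comm (z z' : V n) : symp z' z = -symp z z' := by
  simp only [symp, ← Finset.sum_neg_distrib]
  exact Finset.sum_congr rfl fun i _ => by ring

lemma symp_self (z : V n) : symp z z = 0 :=
  Finset.sum_eq_zero fun i _ => by ring

lemma symp_add_left (z w z' : V n) : symp (z + w) z' = symp z z' + symp w z' := by
  simp only [symp, PiLp.add_apply, ← Finset.sum_add_distrib]
  exact Finset.sum_congr rfl fun i _ => by ring

lemma symp_smul_left (c : ℝ) (z z' : V n) : symp (c • z) z' = c * symp z z' := by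
  simp only [symp, PiLp.smul_apply, smul_eq_mul, Finset.mul_sum]
  exact Finset.sum_congr rfl fun i _ => by ring

lemma symp_add_right (z z' w : V n) : symp z (z' + w) = symp z z' + symp z w := by
  rw [symp_comm, symp_add_left, symp_comm z', symp_comm w]; ring

lemma symp_smul_right (c : ℝ) (z z' : V n) : symp z (c • z') = c * symp z z' := by
  rw [symp_comm, symp_smul_left, symp_comm z']; ring

lemma symp_neg_left (z z' : V n) : symp (-z) z' = -symp z z' := by
  simpa using symp_smul_left (-1) z z'

lemma symp_neg_right (z z' : V n) : symp z (-z') = -symp z z' := by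
  simpa using symp_smul_right (-1) z z'

lemma symp_zero_right (z : V n) : symp z 0 = 0 := by
  simpa using symp_smul_right 0 z z

lemma sum_fin_two_mul (f : Fin (2 * n) → ℝ) :
    ∑ j, f j = ∑ i : Fin n, (f (fstIdx i) + f (sndIdx i)) := by
  rw [← (finCongr (two_mul n)).symm.sum_comp, Fin.sum_univ_add, ← Finset.sum_add_distrib]
  rfl

lemma Jmat_fstIdx (z : V n) (i : Fin n) : Jmat n z (fstIdx i) = -z (sndIdx i) := by
  simp [Jmat, fstIdx, sndIdx]

lemma Jmat_sndIdx (z : V n) (i : Fin n) : Jmat n z (sndIdx i) = z (fstIdx i) := by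
  simp [Jmat, fstIdx, sndIdx]

lemma norm_sq_eq_sum_fin_two_mul (z : V n) :
    ‖z‖ ^ 2 = ∑ i : Fin n, (z (fstIdx i) ^ 2 + z (sndIdx i) ^ 2) := by
  simp only [EuclideanSpace.norm_sq_eq, Real.norm_eq_abs, sq_abs, sum_fin_two_mul]

lemma symp_Jmat_self (z : V n) : symp (Jmat n z) z = ‖z‖ ^ 2 := by
  rw [norm_sq_eq_sum_fin_two_mul]
  exact Finset.sum_congr rfl fun i _ => by rw [Jmat_fstIdx, Jmat_sndIdx]; ring

lemma norm_Jmat (z : V n) : ‖Jmat n z‖ = ‖z‖ := by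
  rw [← sq_eq_sq₀ (norm_nonneg _) (norm_nonneg _), norm_sq_eq_sum_fin_two_mul,
    norm_sq_eq_sum_fin_two_mul]
  exact Finset.sum_congr rfl fun i _ => by rw [Jmat_fstIdx, Jmat_sndIdx]; ring

end Symplectic

section HeisenbergGroup

variable {n : ℕ}

lemma hmul_hinv (g g' : Heis n) :
    hmul (hinv g) g' = (g'.1 - g.1, g'.2 - g.2 - 2 * symp g.1 g'.1) := by
  refine Prod.ext ?_ ?_
  · exact (sub_eq_neg_add _ _).symm
  · simp only [hmul, hinv, symp_neg_left]; ring

lemma hinv_hmul_hinv (g g' : Heis n) : hinv (hmul (hinv g) g') = hmul (hinv g') g := by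
  rw [hmul_hinv, hmul_hinv, symp_comm g.1]
  exact Prod.ext (neg_sub _ _) (by simp only [hinv]; ring)

lemma hmul_hinv_cocycle (g g' g'' : Heis n) :
    hmul (hmul (hinv g) g') (hmul (hinv g') g'') = hmul (hinv g) g'' := by
  rw [hmul_hinv, hmul_hinv, hmul_hinv]
  refine Prod.ext (sub_add_sub_cancel' _ _ _) ?_
  simp only [hmul, sub_eq_add_neg, symp_add_left, symp_add_right, symp_neg_left,
    symp_neg_right, symp_self, symp_comm g''.1 g.1, symp_comm g'.1 g.1]
  ring

end HeisenbergGroup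

namespace IsHomNorm

variable {n : ℕ} {Nh : Heis n → ℝ}

lemma map_zero (hNh : IsHomNorm Nh) : Nh (0, 0) = 0 :=
  (hNh.eq_zero_iff _).mpr rfl

lemma map_neg (hNh : IsHomNorm Nh) (z : V n) (t : ℝ) : Nh (-z, -t) = Nh (z, t) :=
  hNh.symm (z, t)

lemma dist_comm (hNh : IsHomNorm Nh) (g g' : Heis n) :
    Nh (hmul (hinv g) g') = Nh (hmul (hinv g') g) := by
  rw [← hinv_hmul_hinv, hNh.symm]

lemma natCast_smul_le (hNh : IsHomNorm Nh) (z : V n) (t : ℝ) (k : ℕ) :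
    Nh ((k : ℝ) • z, k * t) ≤ k * Nh (z, t) := by
  induction k with
  | zero => simp [hNh.map_zero]
  | succ k ih =>
    have hpow : hmul ((k : ℝ) • z, k * t) (z, t)
        = (((k + 1 : ℕ) : ℝ) • z, (k + 1 : ℕ) * t) := by
      simp only [hmul, symp_smul_left, symp_self]
      push_cast
      exact Prod.ext (by module) (by ring)
    calc Nh (((k + 1 : ℕ) : ℝ) • z, (k + 1 : ℕ) * t)
        ≤ Nh ((k : ℝ) • z, k * t) + Nh (z, t) := hpow ▸ hNh.triangle _ _
      _ ≤ (k + 1 : ℕ) * Nh (z, t) := by push_cast; linarith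

lemma vertical_div_natCast_le (hNh : IsHomNorm Nh) (z : V n) (t : ℝ) {k : ℕ} (hk : 0 < k) :
    Nh (z, t / k) ≤ Nh (z, t) := by
  have hk' : (0 : ℝ) < k := Nat.cast_pos.mpr hk
  have hdil : dil (k : ℝ) (z, t / k) = ((k : ℝ) • z, k * t) :=
    Prod.ext rfl (by simp only [dil]; field_simp)
  have := hNh.homog k hk' (z, t / k)
  rw [hdil] at this
  nlinarith [hNh.natCast_smul_le z t k]

lemma vertical_div_sq (hNh : IsHomNorm Nh) (t : ℝ) {m : ℝ} (hm : 0 < m) :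
    Nh (0, t / m ^ 2) = Nh (0, t) / m := by
  have hdil : dil m⁻¹ ((0 : V n), t) = (0, t / m ^ 2) :=
    Prod.ext (smul_zero _) (by simp only [dil]; field_simp)
  rw [← hdil, hNh.homog _ (inv_pos.mpr hm), inv_mul_eq_div]

lemma horizontal_le (hNh : IsHomNorm Nh) (z : V n) (t : ℝ) : Nh (z, 0) ≤ Nh (z, t) := by
  refine le_of_forall_pos_lt_add fun ε hε => ?_
  obtain ⟨m, hm⟩ := exists_nat_gt (Nh (0, -t) / ε)
  have hm0 : (0 : ℝ) < m := (div_nonneg (hNh.nonneg _) hε.le).trans_lt hm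
  have hsplit : hmul (z, t / m ^ 2) (0, -t / m ^ 2) = (z, 0) :=
    Prod.ext (add_zero z) (by simp only [hmul, symp_zero_right]; ring)
  have hsmall : Nh (0, -t) / m < ε := (div_lt_comm₀ hm0 hε).mpr hm
  calc Nh (z, 0) ≤ Nh (z, t / m ^ 2) + Nh (0, -t / m ^ 2) := hsplit ▸ hNh.triangle _ _
    _ ≤ Nh (z, t) + Nh (0, -t) / m := by
        gcongr
        · exact_mod_cast hNh.vertical_div_natCast_le z t (pow_pos (Nat.cast_pos.mp hm0) 2)
        · exact (hNh.vertical_div_sq (-t) hm0).le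
    _ < Nh (z, t) + ε := by linarith

lemma horizontal_neg (hNh : IsHomNorm Nh) (z : V n) : Nh (-z, 0) = Nh (z, 0) := by
  simpa using hNh.map_neg z 0

lemma horizontal_smul (hNh : IsHomNorm Nh) (c : ℝ) (z : V n) :
    Nh (c • z, 0) = |c| * Nh (z, 0) := by
  rcases lt_trichotomy c 0 with hc | rfl | hc
  · have := hNh.homog (-c) (neg_pos.mpr hc) (-z, 0)
    simp only [dil, smul_neg, neg_smul, neg_neg, mul_zero, hNh.horizontal_neg] at this
    rwa [abs_of_neg hc]
  · simp [hNh.map_zero]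
  · have := hNh.homog c hc (z, 0)
    simp only [dil, mul_zero] at this
    rwa [abs_of_pos hc]

lemma horizontal_add_le (hNh : IsHomNorm Nh) (z z' : V n) :
    Nh (z + z', 0) ≤ Nh (z, 0) + Nh (z', 0) :=
  calc Nh (z + z', 0) ≤ Nh (hmul (z, 0) (z', 0)) := by
        simpa [hmul] using hNh.horizontal_le (z + z') (2 * symp z z')
    _ ≤ Nh (z, 0) + Nh (z', 0) := hNh.triangle _ _

lemma horizontal_pos (hNh : IsHomNorm Nh) {z : V n} (hz : z ≠ 0) : 0 < Nh (z, 0) :=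
  (hNh.nonneg _).lt_of_ne fun h => hz (congrArg Prod.fst ((hNh.eq_zero_iff _).mp h.symm))

def horizontalSeminorm (hNh : IsHomNorm Nh) : Seminorm ℝ (V n) :=
  Seminorm.of (fun z => Nh (z, 0)) hNh.horizontal_add_le
    fun c z => by rw [hNh.horizontal_smul, Real.norm_eq_abs]

lemma horizontalSeminorm_apply (hNh : IsHomNorm Nh) (z : V n) :
    hNh.horizontalSeminorm z = Nh (z, 0) := rfl

lemma vertical_le (hNh : IsHomNorm Nh) (z : V n) (t : ℝ) :
    Nh (0, t) ≤ Nh (z, 0) + Nh (z, t) := by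
  have h : hmul (hinv (z, 0)) (z, t) = (0, t) := by
    rw [hmul_hinv]; exact Prod.ext (sub_self z) (by simp [symp_self])
  calc Nh (0, t) ≤ Nh (hinv (z, 0)) + Nh (z, t) := h ▸ hNh.triangle _ _
    _ = Nh (z, 0) + Nh (z, t) := by rw [hNh.symm]

lemma le_horizontal_add_vertical (hNh : IsHomNorm Nh) (z : V n) (t : ℝ) :
    Nh (z, t) ≤ Nh (z, 0) + Nh (0, t) := by
  have h : hmul (z, 0) (0, t) = (z, t) :=
    Prod.ext (add_zero z) (by simp [hmul, symp_zero_right])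
  exact h ▸ hNh.triangle _ _

lemma vertical_one_pos (hNh : IsHomNorm Nh) : 0 < Nh ((0 : V n), 1) :=
  (hNh.nonneg _).lt_of_ne fun h => one_ne_zero (congrArg Prod.snd ((hNh.eq_zero_iff _).mp h.symm))

lemma vertical_sq (hNh : IsHomNorm Nh) (t : ℝ) :
    Nh ((0 : V n), t) ^ 2 = Nh ((0 : V n), 1) ^ 2 * |t| := by
  have hdil : dil (√|t|) ((0 : V n), 1) = (0, |t|) :=
    Prod.ext (smul_zero _) (by simp only [dil, Real.sq_sqrt (abs_nonneg t), mul_one])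
  have habs : Nh ((0 : V n), t) = Nh (0, |t|) := by
    rcases abs_choice t with h | h
    · rw [h]
    · rw [h]; simpa using (hNh.map_neg 0 t).symm
  rcases (abs_nonneg t).eq_or_lt with h | h
  · obtain rfl : t = 0 := abs_eq_zero.mp h.symm
    simp [hNh.map_zero]
  · rw [habs, ← hdil, hNh.homog _ (Real.sqrt_pos.mpr h), mul_pow, Real.sq_sqrt h.le, mul_comm]

lemma sq_mul_abs_symp_le (hNh : IsHomNorm Nh) (v w : V n) :
    Nh ((0 : V n), 1) ^ 2 * |symp v w| ≤ (Nh (v, 0) + Nh (w, 0)) ^ 2 := by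
  have hcomm : hmul (hmul (v, 0) (w, 0)) (hmul (-v, 0) (-w, 0)) = (0, 4 * symp v w) := by
    simp only [hmul, symp_add_left, symp_add_right, symp_neg_left, symp_neg_right, symp_self,
      symp_comm w v]
    exact Prod.ext (by rw [← neg_add, add_neg_cancel]) (by ring)
  have hle : Nh (0, 4 * symp v w) ≤ 2 * (Nh (v, 0) + Nh (w, 0)) := by
    calc Nh (0, 4 * symp v w)
        ≤ Nh (hmul (v, 0) (w, 0)) + Nh (hmul (-v, 0) (-w, 0)) := hcomm ▸ hNh.triangle _ _
      _ ≤ Nh (v, 0) + Nh (w, 0) + (Nh (-v, 0) + Nh (-w, 0)) :=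
        add_le_add (hNh.triangle _ _) (hNh.triangle _ _)
      _ = 2 * (Nh (v, 0) + Nh (w, 0)) := by rw [hNh.horizontal_neg, hNh.horizontal_neg]; ring
  have hsq := hNh.vertical_sq (4 * symp v w)
  rw [abs_mul, abs_of_pos four_pos] at hsq
  nlinarith [hNh.nonneg (0, 4 * symp v w)]

lemma vertical_add_four_symp_le (hNh : IsHomNorm Nh) (e w : V n) (t : ℝ) :
    Nh (w, t + 4 * symp e w) ≤ Nh (w, t) + 2 * Nh (e, 0) := by
  have hconj : hmul (hmul (e, 0) (w, t)) (-e, 0) = (w, t + 4 * symp e w) := by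
    simp only [hmul, symp_add_left, symp_neg_right, symp_self, symp_comm w e]
    exact Prod.ext (add_neg_cancel_comm e w) (by ring)
  calc Nh (w, t + 4 * symp e w) ≤ Nh (e, 0) + Nh (w, t) + Nh (-e, 0) :=
        hconj ▸ (hNh.triangle _ _).trans (add_le_add (hNh.triangle _ _) le_rfl)
    _ = Nh (w, t) + 2 * Nh (e, 0) := by rw [hNh.horizontal_neg]; ring

lemma exists_mul_vertical_shift_le (hNh : IsHomNorm Nh) :
    ∃ C, ∀ (w : V n) (t s : ℝ),
      Nh (w, 0) * Nh (w, t + s) ≤ Nh (w, 0) * Nh (w, t) + C * |s| := by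
  obtain ⟨C, hC0, hC⟩ := hNh.horizontalSeminorm.exists_le_mul_norm_euclidean
  refine ⟨C ^ 2 / 2, fun w t s => ?_⟩
  rcases eq_or_ne w 0 with rfl | hw
  · rw [hNh.map_zero]; simp only [zero_mul]; positivity
  have hw' : 0 < ‖w‖ := norm_pos_iff.mpr hw
  have hshift : t + 4 * symp ((s / (4 * ‖w‖ ^ 2)) • Jmat n w) w = t + s := by
    rw [symp_smul_left, symp_Jmat_self]; field_simp
  have h1 := hNh.vertical_add_four_symp_le ((s / (4 * ‖w‖ ^ 2)) • Jmat n w) w t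
  rw [hshift, hNh.horizontal_smul] at h1
  have hJ : Nh (Jmat n w, 0) ≤ C * ‖w‖ := (hC (Jmat n w)).trans_eq (by rw [norm_Jmat])
  have hN : Nh (w, 0) ≤ C * ‖w‖ := hC w
  have hr : |s / (4 * ‖w‖ ^ 2)| * ‖w‖ ^ 2 = |s| / 4 := by
    rw [abs_div, abs_of_pos (by positivity : (0 : ℝ) < 4 * ‖w‖ ^ 2)]; field_simp
  have hN0 := hNh.nonneg (w, 0)
  nlinarith [mul_le_mul hN hJ (hNh.nonneg _) (by positivity), abs_nonneg (s / (4 * ‖w‖ ^ 2))]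

end IsHomNorm

def IsGeodesic {n : ℕ} (Nh : Heis n → ℝ) (γ : ℝ → Heis n) : Prop :=
  ∀ s s', Nh (hmul (hinv (γ s)) (γ s')) = |s - s'|

namespace IsGeodesic

variable {n : ℕ} {Nh : Heis n → ℝ} {γ : ℝ → Heis n}

lemma horizontal_le (hγ : IsGeodesic Nh γ) (hNh : IsHomNorm Nh) (s s' : ℝ) :
    Nh ((γ s').1 - (γ s).1, 0) ≤ |s - s'| := by
  rw [← hγ s s', hmul_hinv]
  exact hNh.horizontal_le _ _

lemma deficit_mul_horizontal_le (hγ : IsGeodesic Nh γ) (hNh : IsHomNorm Nh) {C : ℝ}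
    (hC : ∀ (w : V n) (t s : ℝ), Nh (w, 0) * Nh (w, t + s) ≤ Nh (w, 0) * Nh (w, t) + C * |s|)
    {s₀ s₁ b : ℝ} (h₀₁ : s₀ ≤ s₁) (h₁b : s₁ ≤ b) :
    (s₁ - s₀ - Nh ((γ s₁).1 - (γ s₀).1, 0)) * Nh ((γ b).1 - (γ s₀).1, 0)
      ≤ C * |(hmul (hinv (γ s₀)) (γ s₁)).2| := by
  set g₁ := hmul (hinv (γ s₀)) (γ s₁)
  set g₂ := hmul (hinv (γ s₁)) (γ b)
  set g := hmul (hinv (γ s₀)) (γ b)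
  have hg₁ : g₁.1 = (γ s₁).1 - (γ s₀).1 := by simp only [g₁, hmul_hinv]
  have hg : g.1 = (γ b).1 - (γ s₀).1 := by simp only [g, hmul_hinv]
  have hgN : Nh g = b - s₀ :=
    (hγ s₀ b).trans (by rw [abs_sub_comm, abs_of_nonneg (by linarith)])
  have hg₂N : Nh g₂ = b - s₁ :=
    (hγ s₁ b).trans (by rw [abs_sub_comm, abs_of_nonneg (by linarith)])
  -- Straightening the chord `g₁` saves the deficit but shifts `g = g₁ g₂` vertically by
  -- `-g₁.2`; `hC` bounds the cost of undoing that shift.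
  have hstraight : hmul (g₁.1, 0) g₂ = (g.1, g.2 - g₁.2) := by
    rw [← show hmul g₁ g₂ = g from hmul_hinv_cocycle _ _ _]
    exact Prod.ext rfl (by simp only [hmul]; ring)
  have hshort : Nh (g.1, g.2 - g₁.2) ≤ Nh (g₁.1, 0) + (b - s₁) :=
    hg₂N ▸ hstraight ▸ hNh.triangle _ _
  have hshift := hC g.1 (g.2 - g₁.2) g₁.2
  rw [sub_add_cancel, Prod.mk.eta, hgN] at hshift
  rw [← hg₁, ← hg]
  nlinarith [hNh.nonneg (g.1, 0)]

lemma not_forall_horizontal_le (hγ : IsGeodesic Nh γ) (hNh : IsHomNorm Nh) (s₀ D : ℝ) :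
    ¬ ∀ t, s₀ ≤ t → Nh ((γ t).1 - (γ s₀).1, 0) ≤ D := by
  intro hD
  have hD0 : 0 ≤ D := (hNh.nonneg _).trans (hD s₀ le_rfl)
  set c := Nh ((0 : V n), 1)
  set L := 20 * (D + 1)
  set g₁ := hmul (hinv (γ s₀)) (γ (s₀ + L / 2))
  set g₂ := hmul (hinv (γ (s₀ + L / 2))) (γ (s₀ + L))
  set g := hmul (hinv (γ s₀)) (γ (s₀ + L))
  have hcocycle : hmul g₁ g₂ = g := hmul_hinv_cocycle _ _ _
  have hgN : Nh g = L := (hγ _ _).trans (by rw [abs_sub_comm, abs_of_nonneg (by linarith)]; ring)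
  have hg₁N : Nh g₁ = L / 2 :=
    (hγ _ _).trans (by rw [abs_sub_comm, abs_of_nonneg (by linarith)]; ring)
  have hg₂N : Nh g₂ = L / 2 :=
    (hγ _ _).trans (by rw [abs_sub_comm, abs_of_nonneg (by linarith)]; ring)
  have hg : Nh (g.1, 0) ≤ D := by simpa only [g, hmul_hinv] using hD (s₀ + L) (by linarith)
  have hg₁ : Nh (g₁.1, 0) ≤ D := by
    simpa only [g₁, hmul_hinv] using hD (s₀ + L / 2) (by linarith)
  have hg₂ : Nh (g₂.1, 0) ≤ 2 * D := by
    have : g₂.1 = g.1 - g₁.1 := by rw [← hcocycle]; exact (add_sub_cancel_left _ _).symm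
    calc Nh (g₂.1, 0) ≤ Nh (g.1, 0) + Nh (g₁.1, 0) :=
          this ▸ map_sub_le_add hNh.horizontalSeminorm g.1 g₁.1
      _ ≤ 2 * D := by linarith
  -- The vertical part of a geodesic chord grows quadratically in its length, whereas it is
  -- additive up to a bounded error when the horizontal chords stay bounded.
  have hA : L - D ≤ Nh (0, g.2) := by
    linarith [hNh.le_horizontal_add_vertical g.1 g.2]
  have hA₁ : Nh (0, g₁.2) ≤ D + L / 2 := by
    linarith [hNh.vertical_le g₁.1 g₁.2]
  have hA₂ : Nh (0, g₂.2) ≤ 2 * D + L / 2 := by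
    linarith [hNh.vertical_le g₂.1 g₂.2]
  have hω : c ^ 2 * |symp g₁.1 g₂.1| ≤ 9 * D ^ 2 := by
    have := hNh.sq_mul_abs_symp_le g₁.1 g₂.1
    nlinarith [hNh.nonneg (g₁.1, 0), hNh.nonneg (g₂.1, 0)]
  have hsplit : |g.2| ≤ |g₁.2| + |g₂.2| + 2 * |symp g₁.1 g₂.1| := by
    rw [← hcocycle]
    calc |g₁.2 + g₂.2 + 2 * symp g₁.1 g₂.1|
        ≤ |g₁.2 + g₂.2| + |2 * symp g₁.1 g₂.1| := abs_add_le _ _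
      _ ≤ |g₁.2| + |g₂.2| + 2 * |symp g₁.1 g₂.1| := by
        rw [abs_mul, abs_two]; linarith [abs_add_le g₁.2 g₂.2]
  have hsq := hNh.vertical_sq g.2
  have hsq₁ := hNh.vertical_sq g₁.2
  have hsq₂ := hNh.vertical_sq g₂.2
  have hc := sq_nonneg c
  nlinarith [hNh.nonneg (0, g₁.2), hNh.nonneg (0, g₂.2)]

lemma horizontal_le_sub (hγ : IsGeodesic Nh γ) (hNh : IsHomNorm Nh) {s s' : ℝ} (h : s ≤ s') :
    Nh ((γ s').1 - (γ s).1, 0) ≤ s' - s :=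
  (hγ.horizontal_le hNh s s').trans_eq (by rw [abs_sub_comm, abs_of_nonneg (sub_nonneg.mpr h)])

theorem horizontal_eq (hγ : IsGeodesic Nh γ) (hNh : IsHomNorm Nh) {s s' : ℝ} (h : s ≤ s') :
    Nh ((γ s').1 - (γ s).1, 0) = s' - s := by
  refine le_antisymm (hγ.horizontal_le_sub hNh h) (not_lt.mp fun hlt => ?_)
  obtain ⟨C, hC⟩ := hNh.exists_mul_vertical_shift_le
  have hdeficit := fun t (ht : s' ≤ t) => hγ.deficit_mul_horizontal_le hNh hC h ht
  set η := s' - s - Nh ((γ s').1 - (γ s).1, 0)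
  have hη : 0 < η := sub_pos.mpr hlt
  refine hγ.not_forall_horizontal_le hNh s
    (max (C * |(hmul (hinv (γ s)) (γ s')).2| / η) (s' - s)) fun t hst => ?_
  rcases le_total t s' with hts' | hs't
  · exact le_max_of_le_right ((hγ.horizontal_le_sub hNh hst).trans (by linarith))
  · exact le_max_of_le_left ((le_div_iff₀ hη).mpr (by linarith [hdeficit t hs't]))

lemma fst_eq_add_smul (hγ : IsGeodesic Nh γ) (hNh : IsHomNorm Nh)
    (hsc : StrictlyConvexNorm (fun z : V n => Nh (z, 0))) (s : ℝ) :
    (γ s).1 = (γ 0).1 + s • ((γ 1).1 - (γ 0).1) := by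
  refine eq_add_smul_of_forall_lt_lt (f := fun s => (γ s).1) (fun a b c hab hbc => ?_) s
  have hne : ∀ {x y : ℝ}, x < y → (γ y).1 - (γ x).1 ≠ 0 := fun hxy h0 => by
    have := hγ.horizontal_eq hNh hxy.le
    rw [h0, hNh.map_zero] at this
    linarith
  have hab' := hγ.horizontal_eq hNh hab.le
  have hbc' := hγ.horizontal_eq hNh hbc.le
  have := hsc.smul_eq_smul hNh.horizontal_smul (hne hab) (hne hbc) (by
    rw [sub_add_sub_cancel', hγ.horizontal_eq hNh (hab.trans hbc).le, hab', hbc']; ring)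
  rwa [hab', hbc'] at this

lemma snd_eq_add_mul (hγ : IsGeodesic Nh γ) (hNh : IsHomNorm Nh) {p w : V n}
    (hline : ∀ s, (γ s).1 = p + s • w) (s : ℝ) :
    (γ s).2 = (γ 0).2 + s * (2 * symp p w) := by
  set h : ℝ → ℝ := fun s => (γ s).2 - s * (2 * symp p w)
  have hc := hNh.vertical_one_pos (n := n)
  have hquad : ∀ x y, |h y - h x| ≤ 4 / Nh ((0 : V n), 1) ^ 2 * (y - x) ^ 2 := fun x y => by
    have hdisp : hmul (hinv (γ x)) (γ y) = ((y - x) • w, h y - h x) := by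
      rw [hmul_hinv, hline x, hline y]
      refine Prod.ext (by module) ?_
      simp only [h, symp_add_left, symp_add_right, symp_smul_left, symp_smul_right, symp_self,
        symp_comm w p]
      ring
    have hN := hγ x y
    rw [hdisp] at hN
    have h1 := hNh.vertical_le ((y - x) • w) (h y - h x)
    have h2 := hNh.horizontal_le ((y - x) • w) (h y - h x)
    have hsq := hNh.vertical_sq (n := n) (h y - h x)
    rw [div_mul_eq_mul_div, le_div_iff₀ (by positivity), mul_comm]
    nlinarith [hNh.nonneg ((0 : V n), h y - h x), abs_nonneg (x - y), sq_abs (x - y)]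
  have := eq_of_abs_sub_le_mul_sq hquad s 0
  simp only [h] at this
  linarith

end IsGeodesic

namespace IsHomNorm

variable {n : ℕ} {Nh : Heis n → ℝ}

lemma isGeodesic_smul (hNh : IsHomNorm Nh) {u : V n} (hu : Nh (u, 0) = 1) :
    IsGeodesic Nh fun s => (s • u, 0) := fun s s' => by
  rw [hmul_hinv]
  simp only [symp_smul_left, symp_smul_right, symp_self, mul_zero, sub_zero, ← sub_smul,
    hNh.horizontal_smul, hu, mul_one, abs_sub_comm]

lemma isGeodesic_brokenLine (hNh : IsHomNorm Nh) {u u' : V n}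
    (hcone : ∀ a b : ℝ, 0 ≤ a → 0 ≤ b → Nh (a • u + b • u', 0) = a + b) :
    IsGeodesic Nh fun s => if 0 ≤ s then (s • u, 0) else (s • u', 0) := by
  have hu : Nh (u, 0) = 1 := by simpa using hcone 1 0
  have hu' : Nh (u', 0) = 1 := by simpa using hcone 0 1
  intro s s'
  wlog h : s ≤ s' generalizing s s'
  · rw [hNh.dist_comm, abs_sub_comm]; exact this s' s (le_of_not_ge h)
  by_cases hs : 0 ≤ s
  · simp only [if_pos hs, if_pos (hs.trans h)]; exact hNh.isGeodesic_smul hu s s'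
  by_cases hs' : 0 ≤ s'
  · simp only [if_neg hs, if_pos hs', abs_sub_comm s, abs_of_nonneg (sub_nonneg.mpr h)]
    have hinv_eq : hinv (s • u', (0 : ℝ)) = ((-s) • u', 0) :=
      Prod.ext (neg_smul _ _).symm neg_zero
    rw [hinv_eq]
    refine le_antisymm ?_ ?_
    · calc Nh (hmul ((-s) • u', 0) (s' • u, 0)) ≤ Nh ((-s) • u', 0) + Nh (s' • u, 0) :=
            hNh.triangle _ _
        _ = s' - s := by
            rw [hNh.horizontal_smul, hNh.horizontal_smul, hu, hu', abs_of_nonneg hs',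
              abs_of_pos (neg_pos.mpr (not_le.mp hs))]
            ring
    · calc s' - s = Nh (s' • u + (-s) • u', 0) := by rw [hcone _ _ hs' (by linarith)]; ring
        _ ≤ Nh (hmul ((-s) • u', 0) (s' • u, 0)) := by
            rw [add_comm]; exact hNh.horizontal_le _ _
  · simp only [if_neg hs, if_neg hs']; exact hNh.isGeodesic_smul hu' s s'

theorem glp_of_strictlyConvexNorm (hNh : IsHomNorm Nh)
    (hsc : StrictlyConvexNorm (fun z : V n => Nh (z, 0))) :
    GLP n (fun g g' => Nh (hmul (hinv g) g')) := by
  intro γ hγ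
  have hγ : IsGeodesic Nh γ := hγ
  have hfst := hγ.fst_eq_add_smul hNh hsc
  refine ⟨γ 0, ((γ 1).1 - (γ 0).1, 2 * symp (γ 0).1 ((γ 1).1 - (γ 0).1)), fun s =>
    Prod.ext (hfst s) ?_⟩
  rw [hγ.snd_eq_add_mul hNh hfst s]
  rfl

theorem strictlyConvexNorm_of_glp (hNh : IsHomNorm Nh)
    (hglp : GLP n (fun g g' => Nh (hmul (hinv g) g'))) :
    StrictlyConvexNorm (fun z : V n => Nh (z, 0)) := by
  intro z z' hz hz' hadd
  have ha := hNh.horizontal_pos hz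
  have hb := hNh.horizontal_pos hz'
  set u := (Nh (z, 0))⁻¹ • z
  set u' := (Nh (z', 0))⁻¹ • z'
  have hcone : ∀ a b : ℝ, 0 ≤ a → 0 ≤ b → Nh (a • u + b • u', 0) = a + b := by
    intro a b ha' hb'
    have := hNh.horizontalSeminorm.map_smul_add_smul_of_map_add hadd
      (div_nonneg ha' ha.le) (div_nonneg hb' hb.le)
    simp only [horizontalSeminorm_apply, div_mul_cancel₀ _ ha.ne', div_mul_cancel₀ _ hb.ne']
      at this
    simpa only [u, u', smul_smul, div_eq_mul_inv] using this
  obtain ⟨p, q, hline⟩ := hglp _ (hNh.isGeodesic_brokenLine hcone)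
  have h0 : ((0 : V n), (0 : ℝ)) = p := by simpa using hline 0
  have h1 : (u, (0 : ℝ)) = p + q := by simpa using hline 1
  have h2 : (-u', (0 : ℝ)) = p - q := by
    simpa [sub_eq_add_neg, not_le.mpr one_pos] using hline (-1)
  subst h0
  have huu' : u' = u := by
    have e1 := congrArg Prod.fst h1
    have e2 := congrArg Prod.fst h2
    simp only [Prod.fst_add, Prod.fst_sub, zero_add, zero_sub] at e1 e2
    rw [← e1] at e2
    exact neg_inj.mp e2
  refine ⟨Nh (z', 0) / Nh (z, 0), div_pos hb ha, ?_⟩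
  calc z' = Nh (z', 0) • u' := by simp only [u', smul_smul, mul_inv_cancel₀ hb.ne', one_smul]
    _ = (Nh (z', 0) / Nh (z, 0)) • z := by rw [huu', smul_smul, div_eq_mul_inv]

end IsHomNorm

/-- Let `N̂` be a homogeneous norm on `ℍⁿ`, `d = d_N̂` the induced
left-invariant homogeneous distance, and `N(z) = N̂(z,0)` the associated norm on `ℝ^{2n}`.
Then `(ℍⁿ, d)` has the geodesic linearity property iff `N` is strictly convex. -/
theorem stmt0 (n : ℕ) (Nh : Heis n → ℝ) (hNh : IsHomNorm Nh) :
    GLP n (fun g g' => Nh (hmul (hinv g) g')) ↔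
      StrictlyConvexNorm (fun z : V n => Nh (z, (0 : ℝ))) :=
  ⟨hNh.strictlyConvexNorm_of_glp, hNh.glp_of_strictlyConvexNorm⟩
end
end

section
/- Let N be a norm on ℝ^{2n}, T>0, g∈ℍⁿ with g≠e, and let v be an optimal control for the energy problem (P) steering e to g in time T. Then every Pontryagin multiplier (λ₀,λ) associated to v is normal, i.e. λ₀=1. -/
/-!
For an abnormal multiplier (`λ₀ = 0`) the minimum principle says that the linear function
`u ↦ a(s)·u` attains its maximum at `v(s)`, so `a ≡ 0`. Integrating the adjoint equation gives
`a(s) = λ(0) - 4k J γ_I(s)`; hence `λ(0) = 0`, so nontriviality forces `k ≠ 0`, and then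
`γ_I ≡ 0`. The vertical component is the integral of `2⟨γ_I, J v⟩ = 0`, so the trajectory ends
at `e ≠ g`.
-/

open MeasureTheory Set

noncomputable section

open scoped RealInnerProductSpace

lemma eq_zero_of_forall_inner_le {E : Type*} [NormedAddCommGroup E] [InnerProductSpace ℝ E]
    {a w : E} (h : ∀ u, ⟪a, u⟫ ≤ ⟪a, w⟫) : a = 0 := by
  have := h (w + a)
  rw [inner_add_right, real_inner_self_eq_norm_sq] at this
  exact norm_eq_zero.mp (by nlinarith [norm_nonneg a])

lemma dot_eq_inner {n : ℕ} (p z : V n) : dot p z = ⟪p, z⟫ := by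
  simp [dot, PiLp.inner_apply, mul_comm]

lemma Jmat_apply {n : ℕ} (z : V n) (j : Fin (2 * n)) :
    Jmat n z j = if h : (j : ℕ) < n then -z ⟨n + (j : ℕ), by have := j.isLt; omega⟩
      else z ⟨(j : ℕ) - n, by have := j.isLt; omega⟩ := rfl

lemma Jmat_Jmat {n : ℕ} (z : V n) : Jmat n (Jmat n z) = -z := by
  ext j
  rw [PiLp.neg_apply, Jmat_apply]
  split_ifs with hj
  · rw [Jmat_apply, dif_neg (by simp)]
    simp
  · rw [Jmat_apply, dif_pos (by simp; omega)]
    have : (⟨n + (j - n : ℕ), by omega⟩ : Fin (2 * n)) = j := by ext; simp; omega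
    simp [this]

lemma Jmat_injective (n : ℕ) : Function.Injective (Jmat n) :=
  Function.LeftInverse.injective (g := fun z => -Jmat n z) fun z => by simp [Jmat_Jmat]

def Jclm (n : ℕ) : V n →L[ℝ] V n :=
  LinearMap.toContinuousLinearMap
    { toFun := Jmat n
      map_add' := fun z w => by
        ext j
        simp only [Jmat_apply, PiLp.add_apply]
        split_ifs <;> ring
      map_smul' := fun c z => by
        ext j
        simp only [Jmat_apply, PiLp.smul_apply, smul_eq_mul, RingHom.id_apply]
        split_ifs <;> ring }

lemma Jclm_apply {n : ℕ} (z : V n) : Jclm n z = Jmat n z := rfl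

lemma intervalIntegral_Jmat {n : ℕ} {f : ℝ → V n} {a b : ℝ} (hf : IntervalIntegrable f volume a b) :
    ∫ u in a..b, Jmat n (f u) = Jmat n (∫ u in a..b, f u) :=
  (Jclm n).intervalIntegral_comp_comm hf

lemma trajI_zero (n : ℕ) (v : ℝ → V n) : trajI n v 0 = 0 := by
  simp [trajI]

lemma traj_eq_zero_of_trajI_eq_zero {n : ℕ} {T : ℝ} {v : ℝ → V n} (hT : 0 ≤ T)
    (h : ∀ s ∈ Icc 0 T, trajI n v s = 0) : traj n v T = (0, 0) := by
  have hvert : ∫ u in (0 : ℝ)..T, 2 * symp (trajI n v u) (v u) = 0 := by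
    refine intervalIntegral.integral_zero_ae (Filter.Eventually.of_forall fun u hu => ?_)
    rw [uIoc_of_le hT] at hu
    simp [h u (Ioc_subset_Icc_self hu), symp]
  simp [traj, h T ⟨hT, le_rfl⟩, hvert]

namespace PMP

variable {n : ℕ} {N : V n → ℝ} {T : ℝ} {v : ℝ → V n} {l0 : ℝ}

lemma afun_eq (m : PMP n N T v l0) (hv : IntegrableOn v (Icc 0 T)) {s : ℝ} (hs : s ∈ Icc 0 T) :
    afun n v m.lam m.k s = m.lam 0 - (4 * m.k) • Jmat n (trajI n v s) := by
  have hvs : IntervalIntegrable v volume 0 s := by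
    rw [intervalIntegrable_iff_integrableOn_Icc_of_le hs.1]
    exact hv.mono_set (Icc_subset_Icc le_rfl hs.2)
  have hlam : m.lam s = m.lam 0 - (2 * m.k) • Jmat n (trajI n v s) := by
    rw [m.lam_eq s hs, intervalIntegral_Jmat hvs, trajI, ← Jclm_apply, ← Jclm_apply, map_neg,
      smul_neg, sub_neg_eq_add]
  rw [afun, hlam]
  module

lemma afun_eq_zero_of_abnormal (m : PMP n N T v 0) {s : ℝ} (hs : s ∈ Icc 0 T) :
    afun n v m.lam m.k s = 0 :=
  eq_zero_of_forall_inner_le (w := v s) fun u => by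
    simpa [dot_eq_inner] using m.argmin s hs u

lemma traj_eq_zero_of_abnormal (m : PMP n N T v 0) (hT : 0 ≤ T)
    (hv : IntegrableOn v (Icc 0 T)) : traj n v T = (0, 0) := by
  have hJ : ∀ s ∈ Icc 0 T, m.lam 0 = (4 * m.k) • Jmat n (trajI n v s) := fun s hs =>
    sub_eq_zero.mp ((m.afun_eq hv hs).symm.trans (m.afun_eq_zero_of_abnormal hs))
  have hlam0 : m.lam 0 = 0 := by
    simpa [trajI_zero, ← Jclm_apply] using hJ 0 ⟨le_rfl, hT⟩
  have hk : m.k ≠ 0 := fun hk => m.nontriv ⟨rfl, hk, hlam0⟩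
  refine traj_eq_zero_of_trajI_eq_zero hT fun s hs => Jmat_injective n ?_
  have := hJ s hs
  rw [hlam0, eq_comm, smul_eq_zero] at this
  rw [this.resolve_left (by simpa using hk), ← Jclm_apply, map_zero]

end PMP

theorem stmt9_general (n : ℕ) (N : V n → ℝ) (T : ℝ) (hT : 0 < T)
    (g : Heis n) (hg : g ≠ ((0 : V n), (0 : ℝ))) (v : ℝ → V n)
    (hopt : OptimalEnergy n N T g v) (l0 : ℝ) (hl0 : l0 = 0 ∨ l0 = 1)
    (m : PMP n N T v l0) : l0 = 1 := by
  rcases hl0 with rfl | rfl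
  · exact absurd (hopt.1.2.symm.trans (m.traj_eq_zero_of_abnormal hT.le hopt.1.1)) hg
  · rfl

/-- Every Pontryagin multiplier `(λ₀, λ)` associated to an optimal
control of the energy problem (with `g ≠ e`) is normal: `λ₀ = 1`. -/
theorem stmt9 (n : ℕ) (N : V n → ℝ) (hN : IsNorm N) (T : ℝ) (hT : 0 < T)
    (g : Heis n) (hg : g ≠ ((0 : V n), (0 : ℝ))) (v : ℝ → V n)
    (hopt : OptimalEnergy n N T g v) (l0 : ℝ) (hl0 : l0 = 0 ∨ l0 = 1)
    (m : PMP n N T v l0) : l0 = 1 :=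
  stmt9_general n N T hT g hg v hopt l0 hl0 m

end
end

section
/- Let N be a strictly convex norm on ℝ^{2n}, T>0, g∈ℍⁿ with g≠e, and let v be an optimal control for the energy problem (P) with a normal Pontryagin multiplier (1,λ) whose constant last component k=λ_{2n+1} equals 0. Then v is constant on [0,T] and the associated trajectory is a horizontal segment: γ(s)=(−s v, 0) for s∈[0,T]. -/
open MeasureTheory Set

noncomputable section

lemma dot_add_right' {n : ℕ} (p z z' : V n) : dot p (z + z') = dot p z + dot p z' := by
  simp [dot, PiLp.add_apply, mul_add, Finset.sum_add_distrib]

lemma dot_smul_right' {n : ℕ} (p : V n) (a : ℝ) (z : V n) : dot p (a • z) = a * dot p z := by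
  simp only [dot, PiLp.smul_apply, smul_eq_mul, Finset.mul_sum]
  exact Finset.sum_congr rfl fun i _ => by ring

/-- Uniqueness of the minimizer of `F_N(u) - p·u` when `N` is strictly convex. -/
lemma energy_min_unique {n : ℕ} {N : V n → ℝ} (hN : IsNorm N) (hsc : StrictlyConvexNorm N)
    {p z₁ z₂ : V n}
    (h1 : ∀ u, FN N z₁ - dot p z₁ ≤ FN N u - dot p u)
    (h2 : ∀ u, FN N z₂ - dot p z₂ ≤ FN N u - dot p u) : z₁ = z₂ := by
  have heq : FN N z₁ - dot p z₁ = FN N z₂ - dot p z₂ := le_antisymm (h1 z₂) (h2 z₁)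
  have hm := h1 ((1/2 : ℝ) • (z₁ + z₂))
  have hNm : N ((1/2 : ℝ) • (z₁ + z₂)) = (1/2) * N (z₁ + z₂) := by
    rw [hN.smul]; norm_num
  simp only [FN, hNm, dot_smul_right', dot_add_right'] at hm heq
  set n1 := N z₁ with hn1def
  set n2 := N z₂ with hn2def
  set ns := N (z₁ + z₂) with hnsdef
  have hC : ns ≤ n1 + n2 := hN.triangle z₁ z₂
  have h01 : 0 ≤ n1 := hN.nonneg z₁
  have h02 : 0 ≤ n2 := hN.nonneg z₂
  have h0s : 0 ≤ ns := hN.nonneg (z₁ + z₂)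
  -- from hm and heq : 2*(n1² + n2²) ≤ ns²
  have hkey : 2 * (n1 ^ 2 + n2 ^ 2) ≤ ns ^ 2 := by nlinarith [hm, heq]
  have hn12 : n1 = n2 := by nlinarith [sq_nonneg (n1 - n2)]
  have hsum : ns = n1 + n2 := by
    refine le_antisymm hC ?_
    nlinarith [sq_nonneg (ns - n1 - n2)]
  by_cases hz1 : z₁ = 0
  · have hn10 : n1 = 0 := (hN.eq_zero_iff z₁).mpr hz1
    have hz2 : z₂ = 0 := (hN.eq_zero_iff z₂).mp (by rw [← hn2def, ← hn12, hn10])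
    rw [hz1, hz2]
  · have hn1pos : 0 < n1 := by
      rcases lt_or_eq_of_le h01 with h | h
      · exact h
      · exact absurd ((hN.eq_zero_iff z₁).mp h.symm) hz1
    have hz2 : z₂ ≠ 0 := by
      intro h
      have : n2 = 0 := (hN.eq_zero_iff z₂).mpr h
      rw [hn12, this] at hn1pos; exact lt_irrefl 0 hn1pos
    obtain ⟨α, hαpos, hz2eq⟩ := hsc z₁ z₂ hz1 hz2 hsum
    have hn2α : n2 = α * n1 := by
      rw [hn2def, hz2eq, hN.smul, abs_of_pos hαpos]
    have hα1 : α = 1 := by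
      have h' : α * n1 = 1 * n1 := by rw [one_mul, ← hn2α, ← hn12]
      exact mul_right_cancel₀ (ne_of_gt hn1pos) h'
    rw [hz2eq, hα1, one_smul]

/-- If `N` is strictly convex and an optimal control `v` for the
energy problem has a normal multiplier with `k = λ_{2n+1} = 0`, then `v` is constant on
`[0,T]` and the trajectory is the horizontal segment `γ(s) = (−s v, 0)`. -/
theorem stmt13 (n : ℕ) (N : V n → ℝ) (hN : IsNorm N) (hsc : StrictlyConvexNorm N)
    (T : ℝ) (hT : 0 < T) (g : Heis n) (hg : g ≠ ((0 : V n), (0 : ℝ))) (v : ℝ → V n)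
    (hopt : OptimalEnergy n N T g v) (m : PMP n N T v 1) (hk : m.k = 0) :
    ∃ w : V n, (∀ s ∈ Icc (0:ℝ) T, v s = w) ∧
      ∀ s ∈ Icc (0:ℝ) T, traj n v s = (-(s • w), (0 : ℝ)) := by
  -- With k = 0 the multiplier is constant, so `afun` is the constant `m.lam 0`.
  have hafun : ∀ s ∈ Icc (0:ℝ) T, afun n v m.lam m.k s = m.lam 0 := by
    intro s hs
    have hle := m.lam_eq s hs
    simp only [afun, hk] at *
    rw [hle]
    simp
  have hmin : ∀ s ∈ Icc (0:ℝ) T, ∀ u,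
      FN N (v s) - dot (m.lam 0) (v s) ≤ FN N u - dot (m.lam 0) u := by
    intro s hs u
    have := m.argmin s hs u
    rwa [hafun s hs, one_mul, one_mul] at this
  have h0mem : (0:ℝ) ∈ Icc (0:ℝ) T := ⟨le_refl 0, hT.le⟩
  set w := v 0 with hwdef
  have hconst : ∀ s ∈ Icc (0:ℝ) T, v s = w :=
    fun s hs => energy_min_unique hN hsc (hmin s hs) (hmin 0 h0mem)
  have htrajI : ∀ s ∈ Icc (0:ℝ) T, trajI n v s = -(s • w) := by
    intro s hs
    have hEq : Set.EqOn v (fun _ => w) (Set.uIcc (0:ℝ) s) := by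
      intro u hu
      rw [Set.uIcc_of_le hs.1] at hu
      exact hconst u ⟨hu.1, hu.2.trans hs.2⟩
    have hint : (∫ u in (0:ℝ)..s, v u) = s • w := by
      rw [intervalIntegral.integral_congr hEq, intervalIntegral.integral_const, sub_zero]
    simp [trajI, hint]
  refine ⟨w, hconst, ?_⟩
  intro s hs
  have hI := htrajI s hs
  have hZ : Set.EqOn (fun u => 2 * symp (trajI n v u) (v u)) (fun _ => (0:ℝ))
      (Set.uIcc (0:ℝ) s) := by
    intro u hu
    rw [Set.uIcc_of_le hs.1] at hu
    have huT : u ∈ Icc (0:ℝ) T := ⟨hu.1, hu.2.trans hs.2⟩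
    have h1 := htrajI u huT
    have h2 := hconst u huT
    simp only [h1, h2]
    have hsymp : symp (-(u • w)) w = 0 := by
      simp only [symp]
      apply Finset.sum_eq_zero
      intro i _
      simp only [PiLp.neg_apply, PiLp.smul_apply, smul_eq_mul]
      ring
    rw [hsymp]; ring
  have hvert : (∫ u in (0:ℝ)..s, 2 * symp (trajI n v u) (v u)) = 0 := by
    rw [intervalIntegral.integral_congr hZ]
    simp
  rw [traj, Prod.mk.injEq]
  exact ⟨hI, by rw [hvert]; ring⟩

end
end
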